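/- For the vanishing theorem of factorial Grothendieck polynomials in the single-column case: G_{1^r}(⊖t_μ | t) = 0 whenever the partition (1^r) is not contained in μ, where ⊖t_μ = (⊖t_{μ_n+1}, …, ⊖t_{μ_1+n}) is the substitution of negated equivariant parameters at the fixed point μ, G_{1^r}(x|t) = Σ_{j=1}^{n+1-r} [∏_{i=1}^n (x_i ⊕ t_j)] / [∏_{i≠j, i ≤ n+1-r} (t_j ⊖ t_i)], and ⊖t := −t/(1+βt). Concretely: if μ has fewer than r nonzero parts, then substituting x_i = ⊖t_{μ_{n+1-i}+i} into G_{1^r} gives 0. -/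

import Mathlib

open Finset

/-- Vanishing theorem for single-column factorial Grothendieck polynomials:
if the partition `(1^r)` is not contained in `μ` (i.e. `μ_r = 0`), then
`G_{1^r}(⊖t_μ | t) = 0`, where
`G_{1^r}(x|t) = Σ_{j=1}^{n+1-r} [∏_{i=1}^n (x_i ⊕ t_j)] / [∏_{i≠j, i≤n+1-r} (t_j ⊖ t_i)]`,
the substitution is `x_i = ⊖t_{μ_{n+1-i}+i}`, `x ⊕ y = x+y+βxy`,
`x ⊖ y = (x−y)/(1+βy)` and `⊖y = −y/(1+βy)`.  Here `t j` denotes `t_j` (1-based)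
and `μ : Fin n → ℕ` lists `μ₁ ≥ … ≥ μₙ` (0-based). -/
theorem column_grothendieck_vanishing {K : Type*} [Field K] (n : ℕ) (β : K)
    (t : ℕ → K) (μ : Fin n → ℕ) (hμ : Antitone μ)
    (ht : ∀ i j, i ≠ j → t i ≠ t j) (hβ : ∀ i, 1 + β * t i ≠ 0)
    (r : ℕ) (hr1 : 1 ≤ r) (hrn : r ≤ n)
    (hvan : μ ⟨r - 1, by omega⟩ = 0) :
    (∑ j ∈ Finset.Icc 1 (n + 1 - r),
      (∏ i : Fin n,
          (let xi : K := - t (μ ⟨n - 1 - i.val, by omega⟩ + i.val + 1)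
              / (1 + β * t (μ ⟨n - 1 - i.val, by omega⟩ + i.val + 1));
           xi + t j + β * xi * t j))
        / (∏ i ∈ (Finset.Icc 1 (n + 1 - r)).erase j, (t j - t i) / (1 + β * t i)))
      = 0 := by
  apply Finset.sum_eq_zero
  intro j hj
  simp only [Finset.mem_Icc] at hj
  obtain ⟨hj1, hj2⟩ := hj
  rw [Finset.prod_eq_zero (Finset.mem_univ (⟨j - 1, by omega⟩ : Fin n)), zero_div]
  have hμ0 : μ ⟨n - 1 - (j - 1), by omega⟩ = 0 := by
    have h := hμ (show (⟨r - 1, by omega⟩ : Fin n) ≤ ⟨n - 1 - (j - 1), by omega⟩ from by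
      simp only [Fin.le_def]; omega)
    omega
  simp only [hμ0]
  have hidx : 0 + (j - 1) + 1 = j := by omega
  rw [hidx]
  have hd := hβ j
  have hd' : 1 + t j * β ≠ 0 := by rwa [mul_comm β] at hd
  field_simp
  ring
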